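/- arXiv:2308.14579 — 3 statements merged into one kernel-verified Lean document; each statement's English description precedes it below -/
import Mathlib

section
/- Let k be a field containing a primitive cube root of unity ζ and A = k[x,y]⟨μ₃⟩ the skew group algebra for the action σ(x)=ζx, σ(y)=ζ²y. For a,b ∈ k, the 3-dimensional module M_{(a,b)} = k e₁ ⊕ k e₂ ⊕ k e₃ with x acting by diag(a, ζ⁻¹a, ζ⁻²a), y acting by diag(b, ζ⁻²b, ζ⁻¹b), and σ acting by the cyclic permutation matrix, is a simple A-module whenever ab ≠ 0. -/
/-- The defining relations of the skew group algebra
`A = k⟨x,y,σ⟩/(xy − yx, σx − ζxσ, σy − ζ²yσ, σ³ − 1)`, i.e. the crossed product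
`k[x,y]⟨μ₃⟩` for the action `σ(x) = ζx`, `σ(y) = ζ²y`.  Generator `0` is `x`,
generator `1` is `y`, generator `2` is `σ`. -/
inductive MuRel (k : Type*) [CommRing k] (ζ : k) :
    FreeAlgebra k (Fin 3) → FreeAlgebra k (Fin 3) → Prop
  | comm : MuRel k ζ (FreeAlgebra.ι k (0 : Fin 3) * FreeAlgebra.ι k (1 : Fin 3))
      (FreeAlgebra.ι k (1 : Fin 3) * FreeAlgebra.ι k (0 : Fin 3))
  | sx : MuRel k ζ (FreeAlgebra.ι k (2 : Fin 3) * FreeAlgebra.ι k (0 : Fin 3))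
      (ζ • (FreeAlgebra.ι k (0 : Fin 3) * FreeAlgebra.ι k (2 : Fin 3)))
  | sy : MuRel k ζ (FreeAlgebra.ι k (2 : Fin 3) * FreeAlgebra.ι k (1 : Fin 3))
      ((ζ * ζ) • (FreeAlgebra.ι k (1 : Fin 3) * FreeAlgebra.ι k (2 : Fin 3)))
  | s3 : MuRel k ζ (FreeAlgebra.ι k (2 : Fin 3) ^ 3) 1

/-- The skew group algebra `k[x,y]⟨μ₃⟩`. -/
abbrev MuAlg (k : Type*) [CommRing k] (ζ : k) := RingQuot (MuRel k ζ)

/-- The image of `x` in `k[x,y]⟨μ₃⟩`. -/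
noncomputable def muX (k : Type*) [CommRing k] (ζ : k) : MuAlg k ζ :=
  RingQuot.mkAlgHom k (MuRel k ζ) (FreeAlgebra.ι k 0)

/-- The image of `y` in `k[x,y]⟨μ₃⟩`. -/
noncomputable def muY (k : Type*) [CommRing k] (ζ : k) : MuAlg k ζ :=
  RingQuot.mkAlgHom k (MuRel k ζ) (FreeAlgebra.ι k 1)

/-- The image of `σ` in `k[x,y]⟨μ₃⟩`. -/
noncomputable def muS (k : Type*) [CommRing k] (ζ : k) : MuAlg k ζ :=
  RingQuot.mkAlgHom k (MuRel k ζ) (FreeAlgebra.ι k 2)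

/-!
`x` acts diagonally with the three distinct eigenvalues `a, ζ²a, ζa`, so a nonzero invariant
subspace contains a basis vector `eᵢ`; `σ` permutes the basis vectors cyclically, so it then
contains all of them.
-/

open Matrix Function Finset

namespace Submodule

variable {k n : Type*} [Field k]

section Diagonal

variable [Fintype n] [DecidableEq n] {d : n → k} {W : Submodule k (n → k)}

/-- The vector in the conclusion is `(∏ j ∈ s, (diagonal d - d j)) *ᵥ v`. -/
theorem prod_sub_mul_mem_of_diagonal_invariant (hW : ∀ v ∈ W, diagonal d *ᵥ v ∈ W)
    {v : n → k} (hv : v ∈ W) (s : Finset n) :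
    (fun m => (∏ j ∈ s, (d m - d j)) * v m) ∈ W := by
  induction s using Finset.induction_on with
  | empty => simpa using hv
  | insert j s hj ih =>
    have step : (fun m => (∏ x ∈ insert j s, (d m - d x)) * v m) =
        diagonal d *ᵥ (fun m => (∏ x ∈ s, (d m - d x)) * v m) -
          d j • (fun m => (∏ x ∈ s, (d m - d x)) * v m) := by
      funext m
      simp only [prod_insert hj, mulVec_diagonal, Pi.sub_apply, Pi.smul_apply, smul_eq_mul]
      ring
    rw [step]
    exact W.sub_mem (hW _ ih) (W.smul_mem _ ih)

/-- The Lagrange product `∏ j ≠ i, (diagonal d - d j)` projects onto `k eᵢ`. -/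
theorem single_mem_of_diagonal_invariant (hd : Injective d)
    (hW : ∀ v ∈ W, diagonal d *ᵥ v ∈ W) {v : n → k} (hv : v ∈ W) {i : n} (hvi : v i ≠ 0) :
    Pi.single i 1 ∈ W := by
  set c := ∏ j ∈ univ.erase i, (d i - d j)
  have hc : c ≠ 0 := prod_ne_zero_iff.2 fun j hj =>
    sub_ne_zero.2 (hd.ne (ne_of_mem_erase hj).symm)
  have hproj : (fun m => (∏ j ∈ univ.erase i, (d m - d j)) * v m) =
      (c * v i) • Pi.single i 1 := by
    funext m
    by_cases hm : m = i
    · subst hm; simp [c]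
    · have hzero : ∏ j ∈ univ.erase i, (d m - d j) = 0 :=
        prod_eq_zero (mem_erase.2 ⟨hm, mem_univ m⟩) (sub_self (d m))
      simp [hm, hzero]
  have hmem := prod_sub_mul_mem_of_diagonal_invariant hW hv (univ.erase i)
  rw [hproj] at hmem
  exact (W.smul_mem_iff (mul_ne_zero hc hvi)).1 hmem

end Diagonal

theorem eq_top_of_forall_single_mem [Fintype n] [DecidableEq n] {W : Submodule k (n → k)}
    (h : ∀ i, Pi.single i 1 ∈ W) : W = ⊤ :=
  eq_top_iff.2 <| (Pi.basisFun k n).span_eq ▸ span_le.2 (by rintro _ ⟨i, rfl⟩; simpa using h i)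

open Fin.NatCast in
theorem eq_top_of_cyclic_shift_invariant {n : ℕ} {P : Matrix (Fin (n + 1)) (Fin (n + 1)) k}
    (hP : ∀ i, P *ᵥ Pi.single i 1 = Pi.single (i + 1) 1) {W : Submodule k (Fin (n + 1) → k)}
    (hW : ∀ v ∈ W, P *ᵥ v ∈ W) {i : Fin (n + 1)} (hi : Pi.single i 1 ∈ W) : W = ⊤ := by
  have hshift : ∀ m : ℕ, Pi.single (i + (m : Fin (n + 1))) 1 ∈ W := by
    intro m
    induction m with
    | zero => simpa using hi
    | succ m ih => simpa [Nat.cast_succ, ← add_assoc, hP] using hW _ ih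
  refine eq_top_of_forall_single_mem fun j => ?_
  simpa using hshift ((j - i : Fin (n + 1)) : ℕ)

end Submodule

theorem IsPrimitiveRoot.injective_pow_mul {k : Type*} [CommRing k] [IsDomain k] {ω : k} {n : ℕ}
    (hω : IsPrimitiveRoot ω n) {a : k} (ha : a ≠ 0) :
    Injective fun i : Fin n => ω ^ (i : ℕ) * a :=
  fun i j h => Fin.ext (hω.pow_inj i.2 j.2 (mul_right_cancel₀ ha h))

theorem cyclicShift_mulVec_single {k : Type*} [Field k] (i : Fin 3) :
    (!![0,0,1; 1,0,0; 0,1,0] : Matrix (Fin 3) (Fin 3) k) *ᵥ Pi.single i 1 =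
      Pi.single (i + 1) 1 := by
  funext m
  fin_cases i <;> fin_cases m <;> simp [mulVec, dotProduct, Fin.sum_univ_three]

theorem stmt_7_general {k : Type*} [Field k] {ζ : k} (hζ : IsPrimitiveRoot ζ 3)
    (a b : k) (hab : a * b ≠ 0)
    (ρ : MuAlg k ζ →ₐ[k] Matrix (Fin 3) (Fin 3) k)
    (hx : ρ (muX k ζ) = Matrix.diagonal ![a, ζ⁻¹ * a, ζ⁻¹ ^ 2 * a])
    (hσ : ρ (muS k ζ) = !![0,0,1; 1,0,0; 0,1,0])
    (W : Submodule k (Fin 3 → k))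
    (hW : ∀ (r : MuAlg k ζ), ∀ v ∈ W, (ρ r).mulVec v ∈ W) :
    W = ⊥ ∨ W = ⊤ := by
  have hdiag : ![a, ζ⁻¹ * a, ζ⁻¹ ^ 2 * a] = fun i : Fin 3 => ζ⁻¹ ^ (i : ℕ) * a := by
    funext i; fin_cases i <;> simp
  have hxW : ∀ v ∈ W, diagonal (fun i : Fin 3 => ζ⁻¹ ^ (i : ℕ) * a) *ᵥ v ∈ W := by
    rw [← hdiag, ← hx]
    exact hW (muX k ζ)
  have hσW : ∀ v ∈ W, (!![0,0,1; 1,0,0; 0,1,0] : Matrix (Fin 3) (Fin 3) k) *ᵥ v ∈ W := by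
    rw [← hσ]
    exact hW (muS k ζ)
  refine or_iff_not_imp_left.2 fun hbot => ?_
  obtain ⟨v, hv, hv0⟩ := W.ne_bot_iff.1 hbot
  obtain ⟨i, hvi⟩ := ne_iff.1 hv0
  have hi := W.single_mem_of_diagonal_invariant
    (hζ.inv.injective_pow_mul (left_ne_zero_of_mul hab)) hxW hv hvi
  exact W.eq_top_of_cyclic_shift_invariant cyclicShift_mulVec_single hσW hi

/-- For `a, b ∈ k` with `ab ≠ 0`, the 3-dimensional module
`M₍a,b₎ = k e₁ ⊕ k e₂ ⊕ k e₃` over the skew group algebra `A = k[x,y]⟨μ₃⟩`,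
on which `x` acts by `diag(a, ζ⁻¹a, ζ⁻²a)`, `y` acts by `diag(b, ζ⁻²b, ζ⁻¹b)`
and `σ` acts by the cyclic permutation matrix, is a simple `A`-module: any
`A`-invariant subspace is `⊥` or `⊤`. -/
theorem stmt_7 {k : Type*} [Field k] {ζ : k} (hζ : IsPrimitiveRoot ζ 3)
    (a b : k) (hab : a * b ≠ 0)
    (ρ : MuAlg k ζ →ₐ[k] Matrix (Fin 3) (Fin 3) k)
    (hx : ρ (muX k ζ) = Matrix.diagonal ![a, ζ⁻¹ * a, ζ⁻¹ ^ 2 * a])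
    (hy : ρ (muY k ζ) = Matrix.diagonal ![b, ζ⁻¹ ^ 2 * b, ζ⁻¹ * b])
    (hσ : ρ (muS k ζ) = !![0,0,1; 1,0,0; 0,1,0])
    (W : Submodule k (Fin 3 → k))
    (hW : ∀ (r : MuAlg k ζ), ∀ v ∈ W, (ρ r).mulVec v ∈ W) :
    W = ⊥ ∨ W = ⊤ :=
  stmt_7_general hζ a b hab ρ hx hσ W hW
end

section
/- Let A = ℤ⟨x,τ⟩/(x² − d, τx + xτ, τ² − 1) with d squarefree, and let p be an odd prime with x² − d irreducible over 𝔽_p. Let M = 𝔽_p e₁ ⊕ 𝔽_p e₂ with x acting by the matrix [[0,d],[1,0]] and τ by diag(1,−1). Then M is a simple A-module and Ext¹_A(M, M) = 0 (every derivation A → End_{𝔽_p}(M) is inner). -/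
/-- The defining relations of the skew group ring
`A = ℤ⟨x,τ⟩/(x² − d, τx + xτ, τ² − 1) = ℤ[√d]⟨ℤ/2⟩`.
Generator `0` is `x = √d`, generator `1` is `τ` (the Galois involution). -/
inductive ZRel (d : ℤ) : FreeAlgebra ℤ (Fin 2) → FreeAlgebra ℤ (Fin 2) → Prop
  | xsq : ZRel d (FreeAlgebra.ι ℤ (0 : Fin 2) ^ 2) (algebraMap ℤ _ d)
  | anti : ZRel d (FreeAlgebra.ι ℤ (1 : Fin 2) * FreeAlgebra.ι ℤ (0 : Fin 2) +
      FreeAlgebra.ι ℤ (0 : Fin 2) * FreeAlgebra.ι ℤ (1 : Fin 2)) 0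
  | tausq : ZRel d (FreeAlgebra.ι ℤ (1 : Fin 2) ^ 2) 1

/-- The skew group ring `ℤ[√d]⟨ℤ/2⟩`. -/
abbrev ZAlg (d : ℤ) := RingQuot (ZRel d)

/-- The image of `x = √d` in `ℤ[√d]⟨ℤ/2⟩`. -/
noncomputable def zX (d : ℤ) : ZAlg d :=
  RingQuot.mkRingHom (ZRel d) (FreeAlgebra.ι ℤ 0)

/-- The image of `τ` in `ℤ[√d]⟨ℤ/2⟩`. -/
noncomputable def zT (d : ℤ) : ZAlg d :=
  RingQuot.mkRingHom (ZRel d) (FreeAlgebra.ι ℤ 1)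

lemma zX_sq (d : ℤ) : zX d * zX d = ((d : ℤ) : ZAlg d) := by
  have h := RingQuot.mkRingHom_rel (ZRel.xsq (d := d))
  rw [eq_intCast (algebraMap ℤ (FreeAlgebra ℤ (Fin 2))) d] at h
  simpa [zX, map_pow, map_intCast, sq] using h

lemma zT_sq (d : ℤ) : zT d * zT d = 1 := by
  have h := RingQuot.mkRingHom_rel (ZRel.tausq (d := d))
  simpa [zT, map_pow, sq] using h

lemma z_anti (d : ℤ) : zT d * zX d + zX d * zT d = 0 := by
  have h := RingQuot.mkRingHom_rel (ZRel.anti (d := d))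
  simpa [zT, zX, map_add, map_mul] using h

open Polynomial in
/-- Let `A = ℤ⟨x,τ⟩/(x² − d, τx + xτ, τ² − 1)` with `d` squarefree,
and let `p` be an odd prime with `x² − d` irreducible over `𝔽_p` (the inert
case).  Let `M = 𝔽_p e₁ ⊕ 𝔽_p e₂` with `x` acting by `[[0,d],[1,0]]` and `τ` by
`diag(1,−1)` (via a representation `ρ`).  Then `M` is a simple `A`-module and
`Ext¹_A(M, M) = 0`: every derivation `A → End_{𝔽_p}(M)` is inner. -/
theorem stmt_9 {d : ℤ} (hd : Squarefree d) {p : ℕ} [Fact p.Prime] (hp : p ≠ 2)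
    (hirr : Irreducible (X ^ 2 - C (d : ZMod p)))
    (ρ : ZAlg d →+* Matrix (Fin 2) (Fin 2) (ZMod p))
    (hx : ρ (zX d) = !![0, (d : ZMod p); 1, 0])
    (ht : ρ (zT d) = !![1, 0; 0, -1]) :
    (∀ W : Submodule (ZMod p) (Fin 2 → ZMod p),
        (∀ (r : ZAlg d), ∀ v ∈ W, (ρ r).mulVec v ∈ W) → W = ⊥ ∨ W = ⊤) ∧
    (∀ δ : ZAlg d →+ Matrix (Fin 2) (Fin 2) (ZMod p),
        (∀ u v : ZAlg d, δ (u * v) = δ u * ρ v + ρ u * δ v) →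
        ∃ θ : Matrix (Fin 2) (Fin 2) (ZMod p),
          ∀ u : ZAlg d, δ u = θ * ρ u - ρ u * θ) := by
  have h2 : (2 : ZMod p) ≠ 0 := by
    have : ((2:ℕ) : ZMod p) ≠ 0 := by
      rw [Ne, ZMod.natCast_eq_zero_iff]
      intro h
      exact hp ((Nat.prime_dvd_prime_iff_eq (Fact.out) Nat.prime_two).mp h)
    simpa using this
  -- no square root of d mod p
  have hnsq : ∀ r : ZMod p, r ^ 2 ≠ (d : ZMod p) := by
    intro r hr
    have hfac : X ^ 2 - C ((d : ℤ) : ZMod p) = (X - C r) * (X + C r) := by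
      rw [← hr, map_pow]; ring
    rcases hirr.isUnit_or_isUnit hfac with h | h
    · exact (Polynomial.not_isUnit_of_natDegree_pos _
        (by simp [Polynomial.natDegree_X_sub_C])) h
    · rw [show X + C r = X - C (-r) by rw [map_neg, sub_neg_eq_add]] at h
      exact (Polynomial.not_isUnit_of_natDegree_pos _
        (by simp [Polynomial.natDegree_X_sub_C])) h
  have hkey : ∀ a b : ZMod p, a ^ 2 = (d : ZMod p) * b ^ 2 → a = 0 ∧ b = 0 := by
    intro a b hab
    rcases eq_or_ne b 0 with hb | hb
    · subst hb; simp at hab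
      exact ⟨hab, rfl⟩
    · exfalso
      exact hnsq (a * b⁻¹) (by field_simp; linear_combination hab)
  constructor
  · -- simplicity
    intro W hW
    rcases eq_or_ne W ⊥ with h | h
    · exact Or.inl h
    right
    obtain ⟨v, hv, hv0⟩ := Submodule.exists_mem_ne_zero_of_ne_bot h
    have hXv : (!![0, (d : ZMod p); 1, 0]).mulVec v ∈ W := by
      rw [← hx]; exact hW _ v hv
    set a := v 0 with ha
    set b := v 1 with hb
    have hXv' : (!![0, (d : ZMod p); 1, 0]).mulVec v = ![(d : ZMod p) * b, a] := by
      funext i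
      fin_cases i <;> simp [Matrix.mulVec, dotProduct, Fin.sum_univ_two, ← ha, ← hb]
    rw [hXv'] at hXv
    have hab : ¬ (a = 0 ∧ b = 0) := by
      rintro ⟨h1, h2⟩
      apply hv0
      funext i
      fin_cases i <;> simp [← ha, ← hb, h1, h2]
    set c : ZMod p := a ^ 2 - (d : ZMod p) * b ^ 2 with hc
    have hcne : c ≠ 0 := by
      intro h0
      exact hab (hkey a b (by linear_combination h0))
    have he0 : (![c, 0] : Fin 2 → ZMod p) ∈ W := by
      have := W.sub_mem (W.smul_mem a hv) (W.smul_mem b hXv)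
      convert this using 1
      funext i
      fin_cases i <;> simp [← ha, ← hb, hc] <;> ring
    have he1 : (![0, c] : Fin 2 → ZMod p) ∈ W := by
      have := W.sub_mem (W.smul_mem a hXv) (W.smul_mem ((d : ZMod p) * b) hv)
      convert this using 1
      funext i
      fin_cases i <;> simp [← ha, ← hb, hc] <;> ring
    rw [Submodule.eq_top_iff']
    intro w
    have : w = (w 0 * c⁻¹) • ![c, 0] + (w 1 * c⁻¹) • ![0, c] := by
      funext i
      fin_cases i <;> simp <;> field_simp
    rw [this]
    exact W.add_mem (W.smul_mem _ he0) (W.smul_mem _ he1)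
  · -- derivations are inner
    intro δ hder
    have h1 : δ 1 = 0 := by
      have h : δ 1 = δ 1 + δ 1 := by
        have h := hder 1 1
        rwa [mul_one, map_one ρ, mul_one, one_mul] at h
      exact (left_eq_add.mp h)
    have hint : ∀ n : ℤ, δ ((n : ZAlg d)) = 0 := by
      intro n
      have hcast : ((n : ZAlg d)) = n • (1 : ZAlg d) := (zsmul_one n).symm
      rw [hcast, map_zsmul, h1, smul_zero]
    set a := δ (zX d) with hadef
    set b := δ (zT d) with hbdef
    set Xm : Matrix (Fin 2) (Fin 2) (ZMod p) := !![0, (d : ZMod p); 1, 0] with hXm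
    set Tm : Matrix (Fin 2) (Fin 2) (ZMod p) := !![1, 0; 0, -1] with hTm
    clear_value a b Xm Tm
    obtain ⟨a00, a01, a10, a11, ha⟩ : ∃ x y z w, a = !![x, y; z, w] :=
      ⟨_, _, _, _, Matrix.eta_fin_two a⟩
    obtain ⟨b00, b01, b10, b11, hb⟩ : ∃ x y z w, b = !![x, y; z, w] :=
      ⟨_, _, _, _, Matrix.eta_fin_two b⟩
    subst ha hb
    have E1 : (!![a00, a01; a10, a11] : Matrix (Fin 2) (Fin 2) (ZMod p)) * Xm
        + Xm * !![a00, a01; a10, a11] = 0 := by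
      have h := hder (zX d) (zX d)
      rw [zX_sq, hint, hx, ← hadef] at h
      exact h.symm
    have E3 : (!![b00, b01; b10, b11] : Matrix (Fin 2) (Fin 2) (ZMod p)) * Tm
        + Tm * !![b00, b01; b10, b11] = 0 := by
      have h := hder (zT d) (zT d)
      rw [zT_sq, h1, ht, ← hbdef] at h
      exact h.symm
    have E2 : (!![b00, b01; b10, b11] : Matrix (Fin 2) (Fin 2) (ZMod p)) * Xm
        + Tm * !![a00, a01; a10, a11]
        + (!![a00, a01; a10, a11] * Tm + Xm * !![b00, b01; b10, b11]) = 0 := by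
      have h := congrArg δ (z_anti d)
      rw [map_add, map_zero, hder, hder, hx, ht, ← hadef, ← hbdef] at h
      exact h
    rw [hXm] at E1 E2
    rw [hTm] at E2 E3
    have f1 : a01 + (d : ZMod p) * a10 = 0 := by
      have := congrFun (congrFun E1 0) 0
      simpa [Matrix.mul_apply, Fin.sum_univ_two] using this
    have g0 : b00 = 0 := by
      have := congrFun (congrFun E3 0) 0
      have h' : b00 + b00 = 0 := by
        simpa [Matrix.mul_apply, Fin.sum_univ_two] using this
      exact mul_left_cancel₀ h2 (by rw [mul_zero]; linear_combination h')
    have g1 : b11 = 0 := by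
      have := congrFun (congrFun E3 1) 1
      have h' : b11 + b11 = 0 := by
        have h'' := this
        simp [Matrix.mul_apply, Fin.sum_univ_two] at h''
        linear_combination -h''
      exact mul_left_cancel₀ h2 (by rw [mul_zero]; linear_combination h')
    have m00 : b01 + a00 + (a00 + (d : ZMod p) * b10) = 0 := by
      have := congrFun (congrFun E2 0) 0
      simpa [Matrix.mul_apply, Fin.sum_univ_two] using this
    have m11 : b10 * (d : ZMod p) + -a11 + (-a11 + b01) = 0 := by
      have := congrFun (congrFun E2 1) 1
      simpa [Matrix.mul_apply, Fin.sum_univ_two] using this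
    set θ : Matrix (Fin 2) (Fin 2) (ZMod p) :=
      !![0, -(2⁻¹ * b01); 2⁻¹ * b10, a10] with hθ
    have hθX : (!![a00, a01; a10, a11] : Matrix (Fin 2) (Fin 2) (ZMod p))
        = θ * Xm - Xm * θ := by
      rw [hθ, hXm, Matrix.mul_fin_two, Matrix.mul_fin_two]
      refine Matrix.ext ?_
      simp only [Fin.forall_fin_two]
      refine ⟨⟨?_, ?_⟩, ?_, ?_⟩
      · simp [Matrix.sub_apply]
        field_simp
        linear_combination m00
      · simp [Matrix.sub_apply]
        linear_combination f1
      · simp [Matrix.sub_apply]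
      · simp [Matrix.sub_apply]
        field_simp
        linear_combination -m11
    have hθT : (!![b00, b01; b10, b11] : Matrix (Fin 2) (Fin 2) (ZMod p))
        = θ * Tm - Tm * θ := by
      rw [hθ, hTm, Matrix.mul_fin_two, Matrix.mul_fin_two]
      refine Matrix.ext ?_
      simp only [Fin.forall_fin_two]
      refine ⟨⟨?_, ?_⟩, ?_, ?_⟩
      · simp [Matrix.sub_apply]
        exact g0
      · simp [Matrix.sub_apply]
        (try field_simp)
        (try ring)
      · simp [Matrix.sub_apply]
        (try field_simp)
        (try ring)
      · simp [Matrix.sub_apply]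
        exact g1
    refine ⟨θ, ?_⟩
    intro u
    obtain ⟨v, rfl⟩ := RingQuot.mkRingHom_surjective (ZRel d) u
    induction v using FreeAlgebra.induction with
    | grade0 r =>
      have hc : RingQuot.mkRingHom (ZRel d) (algebraMap ℤ _ r) = ((r : ZAlg d)) := by
        rw [eq_intCast (algebraMap ℤ (FreeAlgebra ℤ (Fin 2))) r]
        simp [map_intCast]
      rw [hc, hint, map_intCast]
      rw [(Int.cast_commute r θ).eq, sub_self]
    | grade1 i =>
      fin_cases i
      · show δ (zX d) = θ * ρ (zX d) - ρ (zX d) * θ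
        rw [hx, ← hadef]
        exact hθX
      · show δ (zT d) = θ * ρ (zT d) - ρ (zT d) * θ
        rw [ht, ← hbdef]
        exact hθT
    | mul x y ihx ihy =>
      rw [map_mul, hder, ihx, ihy, map_mul]
      noncomm_ring
    | add x y ihx ihy =>
      rw [map_add, map_add, ihx, ihy, map_add]
      noncomm_ring
end

section
/- Let A = ℤ⟨x,τ⟩/(x² − d, τx + xτ, τ² − 1) with d ≡ 2 mod 4 squarefree, and consider p = 2. Let M₁ = 𝔽₂ with x↦0, τ↦1. Then Ext¹_A(M₁, M₁) ≅ 𝔽₂², i.e., the space of derivations A → 𝔽₂ modulo inner derivations is 2-dimensional. -/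
noncomputable section StmtElevenAux

open TrivSqZeroExt

/-- Hom extensionality for `ZAlg d`: ring homs agreeing on `x` and `τ` are equal. -/
lemma zalg_hom_ext {d : ℤ} {S : Type} [Ring S] (f g : ZAlg d →+* S)
    (hX : f (zX d) = g (zX d)) (hT : f (zT d) = g (zT d)) : f = g := by
  apply RingQuot.ringQuot_ext
  have h : (f.comp (RingQuot.mkRingHom (ZRel d))).toIntAlgHom =
      (g.comp (RingQuot.mkRingHom (ZRel d))).toIntAlgHom := by
    apply FreeAlgebra.hom_ext
    funext i
    fin_cases i
    · exact hX
    · exact hT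
  ext u
  exact congrArg (fun h => h.toRingHom u) h

/-- The ring hom `u ↦ (φ u, δ u)` into dual numbers attached to a `φ`-derivation `δ`. -/
def psiOf {d : ℤ} (φ : ZAlg d →+* ZMod 2) (δ : ZAlg d →+ ZMod 2)
    (hδ : ∀ u v : ZAlg d, δ (u * v) = δ u * φ v + φ u * δ v) :
    ZAlg d →+* DualNumber (ZMod 2) where
  toFun u := (φ u, δ u)
  map_one' := by
    have h1 : δ 1 = 0 := by
      have := hδ 1 1
      simpa using this.symm
    exact TrivSqZeroExt.ext (by simp) (by simpa using h1)
  map_mul' u v := by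
    refine TrivSqZeroExt.ext (map_mul φ u v) ?_
    show δ (u * v) = φ u * δ v + δ u * φ v
    simp only [snd_mul, fst_mk, snd_mk, smul_eq_mul, op_smul_eq_mul, hδ u v, map_mul]
    ring
  map_zero' := TrivSqZeroExt.ext (by simp) (by simp)
  map_add' u v := TrivSqZeroExt.ext (map_add φ u v) (map_add δ u v)

/-- Derivations agreeing on the generators are equal. -/
lemma deriv_ext {d : ℤ} (φ : ZAlg d →+* ZMod 2) (δ δ' : ZAlg d →+ ZMod 2)
    (hδ : ∀ u v : ZAlg d, δ (u * v) = δ u * φ v + φ u * δ v)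
    (hδ' : ∀ u v : ZAlg d, δ' (u * v) = δ' u * φ v + φ u * δ' v)
    (hX : δ (zX d) = δ' (zX d)) (hT : δ (zT d) = δ' (zT d)) : ∀ u, δ u = δ' u := by
  have h := zalg_hom_ext (psiOf φ δ hδ) (psiOf φ δ' hδ')
    (TrivSqZeroExt.ext rfl hX) (TrivSqZeroExt.ext rfl hT)
  intro u
  exact congrArg (fun f => TrivSqZeroExt.snd (f u)) h

/-- In `ZMod 2`, everything is its own additive inverse. -/
lemma zmod2_add_self (a : ZMod 2) : a + a = 0 := by
  have : (2 : ZMod 2) * a = 0 := by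
    have : (2 : ZMod 2) = 0 := rfl
    rw [this, zero_mul]
  rwa [two_mul] at this

/-- The free-algebra map `x ↦ (0, a)`, `τ ↦ (1, b)` into dual numbers. -/
def Fab (a b : ZMod 2) : FreeAlgebra ℤ (Fin 2) →ₐ[ℤ] DualNumber (ZMod 2) :=
  FreeAlgebra.lift ℤ ![TrivSqZeroExt.inr a, 1 + TrivSqZeroExt.inr b]

lemma Fab_rel {d : ℤ} (hd4 : d % 4 = 2) (a b : ZMod 2) :
    ∀ ⦃u v⦄, ZRel d u v → Fab a b u = Fab a b v := by
  intro u v h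
  induction h with
  | xsq =>
      have hdc : ((d : ZMod 2)) = 0 := by
        rw [ZMod.intCast_zmod_eq_zero_iff_dvd]
        omega
      simp only [map_pow, map_mul, AlgHom.commutes, Fab, FreeAlgebra.lift_ι_apply]
      rw [sq, Matrix.cons_val_zero, TrivSqZeroExt.inr_mul_inr]
      rw [eq_intCast (algebraMap ℤ (DualNumber (ZMod 2))) d,
        show ((d : DualNumber (ZMod 2))) = TrivSqZeroExt.inl ((d : ℤ) : ZMod 2) from
          (TrivSqZeroExt.inl_intCast d).symm, hdc]
      simp
  | anti =>
      simp only [map_add, map_mul, Fab, FreeAlgebra.lift_ι_apply,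
        Matrix.cons_val_zero, Matrix.cons_val_one, Matrix.head_cons, map_zero]
      refine TrivSqZeroExt.ext (by simp) ?_
      simp [TrivSqZeroExt.snd_mul, zmod2_add_self, add_comm]
  | tausq =>
      simp only [map_pow, map_one, Fab, FreeAlgebra.lift_ι_apply,
        Matrix.cons_val_one, Matrix.head_cons]
      rw [sq]
      refine TrivSqZeroExt.ext (by simp) ?_
      simp [TrivSqZeroExt.snd_mul, zmod2_add_self]

/-- The ring hom on the quotient. -/
def psiAB {d : ℤ} (hd4 : d % 4 = 2) (a b : ZMod 2) : ZAlg d →+* DualNumber (ZMod 2) :=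
  RingQuot.lift ⟨(Fab a b).toRingHom, Fab_rel hd4 a b⟩

lemma psiAB_zX {d : ℤ} (hd4 : d % 4 = 2) (a b : ZMod 2) :
    psiAB (d := d) hd4 a b (zX d) = TrivSqZeroExt.inr a := by
  rw [zX, psiAB, RingQuot.lift_mkRingHom_apply]
  simp [Fab, FreeAlgebra.lift_ι_apply]

lemma psiAB_zT {d : ℤ} (hd4 : d % 4 = 2) (a b : ZMod 2) :
    psiAB (d := d) hd4 a b (zT d) = 1 + TrivSqZeroExt.inr b := by
  rw [zT, psiAB, RingQuot.lift_mkRingHom_apply]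
  simp [Fab, FreeAlgebra.lift_ι_apply]

/-- The derivation attached to `(a, b)`. -/
def delAB {d : ℤ} (hd4 : d % 4 = 2) (a b : ZMod 2) : ZAlg d →+ ZMod 2 :=
  ((TrivSqZeroExt.sndHom (ZMod 2) (ZMod 2)).toAddMonoidHom).comp
    (psiAB (d := d) hd4 a b).toAddMonoidHom

lemma delAB_apply {d : ℤ} (hd4 : d % 4 = 2) (a b : ZMod 2) (u : ZAlg d) :
    delAB (d := d) hd4 a b u = TrivSqZeroExt.snd (psiAB (d := d) hd4 a b u) := rfl

lemma fst_psiAB {d : ℤ} (hd4 : d % 4 = 2) (a b : ZMod 2)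
    (φ : ZAlg d →+* ZMod 2) (hx : φ (zX d) = 0) (ht : φ (zT d) = 1) (u : ZAlg d) :
    TrivSqZeroExt.fst (psiAB (d := d) hd4 a b u) = φ u := by
  have h := zalg_hom_ext
    ((TrivSqZeroExt.fstHom (ZMod 2) (ZMod 2) (ZMod 2)).toRingHom.comp
      (psiAB (d := d) hd4 a b)) φ
    (by simp [psiAB_zX, hx]) (by simp [psiAB_zT, ht])
  exact congrArg (fun f => f u) h

lemma delAB_deriv {d : ℤ} (hd4 : d % 4 = 2) (a b : ZMod 2)
    (φ : ZAlg d →+* ZMod 2) (hx : φ (zX d) = 0) (ht : φ (zT d) = 1) (u v : ZAlg d) :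
    delAB (d := d) hd4 a b (u * v) =
      delAB hd4 a b u * φ v + φ u * delAB hd4 a b v := by
  simp only [delAB_apply, map_mul, TrivSqZeroExt.snd_mul, smul_eq_mul, op_smul_eq_mul,
    fst_psiAB hd4 a b φ hx ht]
  ring

end StmtElevenAux

/-- Let `A = ℤ⟨x,τ⟩/(x² − d, τx + xτ, τ² − 1)` with `d ≡ 2 mod 4`
squarefree, and take `p = 2`.  Let `M₁ = 𝔽₂` with `x ↦ 0`, `τ ↦ 1` (via `φ`).
Then `Ext¹_A(M₁, M₁) ≅ 𝔽₂²`: the space of derivations `A → 𝔽₂` modulo inner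
derivations is two-dimensional (and all inner derivations vanish). -/
theorem stmt_11 {d : ℤ} (hd : Squarefree d) (hd4 : d % 4 = 2)
    (φ : ZAlg d →+* ZMod 2) (hx : φ (zX d) = 0) (ht : φ (zT d) = 1) :
    (∃ δ₁ δ₂ : ZAlg d →+ ZMod 2,
      (∀ u v : ZAlg d, δ₁ (u * v) = δ₁ u * φ v + φ u * δ₁ v) ∧
      (∀ u v : ZAlg d, δ₂ (u * v) = δ₂ u * φ v + φ u * δ₂ v) ∧
      (∀ c₁ c₂ : ZMod 2, (∀ u : ZAlg d, c₁ * δ₁ u + c₂ * δ₂ u = 0) →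
        c₁ = 0 ∧ c₂ = 0) ∧
      (∀ δ : ZAlg d →+ ZMod 2,
        (∀ u v : ZAlg d, δ (u * v) = δ u * φ v + φ u * δ v) →
        ∃ c₁ c₂ : ZMod 2, ∀ u : ZAlg d, δ u = c₁ * δ₁ u + c₂ * δ₂ u)) ∧
    (∀ θ : ZMod 2, ∀ u : ZAlg d, θ * φ u - φ u * θ = 0) := by
  have e1 : delAB (d := d) hd4 1 0 (zX d) = 1 := by rw [delAB_apply, psiAB_zX]; simp
  have e2 : delAB (d := d) hd4 1 0 (zT d) = 0 := by rw [delAB_apply, psiAB_zT]; simp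
  have e3 : delAB (d := d) hd4 0 1 (zX d) = 0 := by rw [delAB_apply, psiAB_zX]; simp
  have e4 : delAB (d := d) hd4 0 1 (zT d) = 1 := by rw [delAB_apply, psiAB_zT]; simp
  refine ⟨⟨delAB hd4 1 0, delAB hd4 0 1,
      delAB_deriv hd4 1 0 φ hx ht, delAB_deriv hd4 0 1 φ hx ht, ?_, ?_⟩, ?_⟩
  · intro c₁ c₂ h
    have h1 := h (zX d)
    have h2 := h (zT d)
    rw [e1, e3] at h1
    rw [e2, e4] at h2
    constructor
    · simpa using h1
    · simpa using h2
  · intro δ hδ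
    refine ⟨δ (zX d), δ (zT d), ?_⟩
    set δ' : ZAlg d →+ ZMod 2 :=
      { toFun := fun u => δ (zX d) * delAB hd4 1 0 u + δ (zT d) * delAB hd4 0 1 u
        map_zero' := by simp
        map_add' := by intro u v; simp only [map_add]; ring } with hδ'def
    have hδ' : ∀ u v : ZAlg d, δ' (u * v) = δ' u * φ v + φ u * δ' v := by
      intro u v
      simp only [hδ'def, AddMonoidHom.coe_mk, ZeroHom.coe_mk,
        delAB_deriv hd4 1 0 φ hx ht, delAB_deriv hd4 0 1 φ hx ht]
      ring
    have key := deriv_ext φ δ δ' hδ hδ'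
      (by simp [hδ'def, e1, e3]) (by simp [hδ'def, e2, e4])
    intro u
    simpa [hδ'def] using key u
  · intro θ u
    rw [mul_comm, sub_self]
end
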